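/- For a monomial ideal I ⊂ S and any j ≥ 0, hreg(I) ≤ hreg(I_{≥ j}), where I_{≥ j} is the ideal generated by all homogeneous elements of I of degree ≥ j. -/

import Mathlib

open MvPolynomial

/-- The monomial `x^c = x_1^{c 1} ⋯ x_n^{c n}` in `K[x_1,…,x_n]`. -/
noncomputable def monX (n : ℕ) (K : Type*) [Field K] (c : Fin n → ℕ) :
    MvPolynomial (Fin n) K := ∏ i, X i ^ c i

/-- `ρ(b) = |{k : b k = g k}|`. -/
def rho {n : ℕ} (g b : Fin n → ℕ) : ℕ := (Finset.univ.filter fun k => b k = g k).card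

/-- The `j`-th skeleton ideal of `I` with respect to `g`: the ideal generated by `I`
together with all monomials `x^b` with `ρ(b) > j`. -/
noncomputable def skel {n : ℕ} (K : Type*) [Field K]
    (I : Ideal (MvPolynomial (Fin n) K)) (g : Fin n → ℕ) (j : ℕ) :
    Ideal (MvPolynomial (Fin n) K) :=
  I ⊔ Ideal.span {m | ∃ b : Fin n → ℕ, j < rho g b ∧ m = monX n K b}

/-- The characteristic poset `P^g_{S/I} = {b ∈ ℕ^n : b ≤ g, x^b ∉ I}`. -/
def charPoset {n : ℕ} (K : Type*) [Field K]
    (I : Ideal (MvPolynomial (Fin n) K)) (g : Fin n → ℕ) : Set (Fin n → ℕ) :=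
  {b | b ≤ g ∧ monX n K b ∉ I}

/-- The characteristic poset `P^g_{J/I} = {b ∈ ℕ^n : b ≤ g, x^b ∈ J \ I}`. -/
def charPoset2 {n : ℕ} (K : Type*) [Field K]
    (I J : Ideal (MvPolynomial (Fin n) K)) (g : Fin n → ℕ) : Set (Fin n → ℕ) :=
  {b | b ≤ g ∧ monX n K b ∈ J ∧ monX n K b ∉ I}

/-- The graded maximal ideal `m = (x_1,…,x_n)`. -/
noncomputable def mxId (n : ℕ) (K : Type*) [Field K] : Ideal (MvPolynomial (Fin n) K) :=
  Ideal.span (Set.range (X : Fin n → MvPolynomial (Fin n) K))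

/-- The depth of a module over `S = K[x_1,…,x_n]` with respect to the graded
maximal ideal: the supremum of lengths of regular sequences contained in `m`. -/
noncomputable def mdepth (n : ℕ) (K : Type*) [Field K] (M : Type*) [AddCommGroup M]
    [Module (MvPolynomial (Fin n) K) M] : ℕ :=
  sSup {r | ∃ rs : List (MvPolynomial (Fin n) K), rs.length = r ∧
    (∀ x ∈ rs, x ∈ mxId n K) ∧ RingTheory.Sequence.IsRegular M rs}

/-- Krull dimension of a module: `dim S/ann M`. -/
noncomputable def mdim (n : ℕ) (K : Type*) [Field K] (M : Type*) [AddCommGroup M]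
    [Module (MvPolynomial (Fin n) K) M] : WithBot (WithTop ℕ) :=
  ringKrullDim (MvPolynomial (Fin n) K ⧸ Module.annihilator (MvPolynomial (Fin n) K) M)

/-- `M` is a Cohen–Macaulay `S`-module of dimension `j`. -/
noncomputable def IsCMof (n : ℕ) (K : Type*) [Field K] (M : Type*) [AddCommGroup M]
    [Module (MvPolynomial (Fin n) K) M] (j : ℕ) : Prop :=
  mdepth n K M = j ∧ mdim n K M = (j : WithBot (WithTop ℕ))

/-- `M` is a Cohen–Macaulay `S`-module (depth = Krull dimension). -/
noncomputable def IsCM (n : ℕ) (K : Type*) [Field K] (M : Type*) [AddCommGroup M]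
    [Module (MvPolynomial (Fin n) K) M] : Prop :=
  (mdepth n K M : WithBot (WithTop ℕ)) = mdim n K M

/-- A partition of a subset `P` of `ℕ^n` into (nonempty) intervals `[cᵢ, dᵢ]`. -/
structure IntervalPartition {n : ℕ} (P : Set (Fin n → ℕ)) where
  r : ℕ
  c : Fin r → (Fin n → ℕ)
  d : Fin r → (Fin n → ℕ)
  le : ∀ i, c i ≤ d i
  cover : P = ⋃ i, Set.Icc (c i) (d i)
  disj : Pairwise (Function.onFun Disjoint fun i => Set.Icc (c i) (d i))

/-- The (combinatorial) Stanley depth of `S/I`: the maximum over interval partitions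
of the characteristic poset `P^g_{S/I}` of `min_i ρ(dᵢ)` (Herzog–Vladoiu–Zheng). -/
noncomputable def sdepthQ {n : ℕ} (K : Type*) [Field K]
    (I : Ideal (MvPolynomial (Fin n) K)) (g : Fin n → ℕ) : ℕ :=
  sSup {t | ∃ P : IntervalPartition (charPoset K I g), ∀ i, t ≤ rho g (P.d i)}

/-- The set of exponents `{c + e : supp e ⊆ Z}`, i.e. the exponents of the monomials
spanning the Stanley space `x^c K[Z]`. -/
def orth {n : ℕ} (c : Fin n → ℕ) (Z : Finset (Fin n)) : Set (Fin n → ℕ) :=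
  {b | c ≤ b ∧ ∀ k ∉ Z, b k = c k}

/-- A Stanley decomposition of `J/I` (for monomial ideals `I ⊆ J`), encoded by the
induced partition of the monomial `K`-basis of `J/I` into Stanley spaces `x^{cᵢ} K[Zᵢ]`. -/
structure StanleyDec {n : ℕ} (K : Type*) [Field K]
    (I J : Ideal (MvPolynomial (Fin n) K)) where
  r : ℕ
  c : Fin r → (Fin n → ℕ)
  Z : Fin r → Finset (Fin n)
  cover : {b | monX n K b ∈ J ∧ monX n K b ∉ I} = ⋃ i, orth (c i) (Z i)
  disj : Pairwise (Function.onFun Disjoint fun i => orth (c i) (Z i))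

/-- The `h`-regularity of `J/I`: the minimum over Stanley decompositions of `max_i |cᵢ|`. -/
noncomputable def hregQ {n : ℕ} (K : Type*) [Field K]
    (I J : Ideal (MvPolynomial (Fin n) K)) : ℕ :=
  sInf {h | ∃ D : StanleyDec K I J, ∀ i, (∑ k, D.c i k) ≤ h}

/-- `σ(Pt) = max_i max{|c| : c ∈ [cᵢ,dᵢ], c k = cᵢ k for all k with dᵢ k = g k}`. -/
noncomputable def sigmaP {n : ℕ} (g : Fin n → ℕ) {P : Set (Fin n → ℕ)}
    (Pt : IntervalPartition P) : ℕ :=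
  sSup {s | ∃ i : Fin Pt.r, ∃ cc ∈ Set.Icc (Pt.c i) (Pt.d i),
    (∀ k, Pt.d i k = g k → cc k = Pt.c i k) ∧ s = ∑ k, cc k}

/-- The truncation `I_{≥ j}`: the ideal generated by all homogeneous elements of `I`
of degree at least `j`. -/
noncomputable def trunc {n : ℕ} (K : Type*) [Field K]
    (I : Ideal (MvPolynomial (Fin n) K)) (j : ℕ) : Ideal (MvPolynomial (Fin n) K) :=
  Ideal.span {f | f ∈ I ∧ ∃ d, j ≤ d ∧ MvPolynomial.IsHomogeneous f d}

/-- A `d`-linear (graded free) resolution of the ideal `I`: a finite exact complex of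
finite free modules augmented to `I`, in which the entries of the augmentation are
homogeneous of degree `d` and all entries of the differentials are linear forms. -/
structure LinearRes {n : ℕ} (K : Type*) [Field K]
    (I : Ideal (MvPolynomial (Fin n) K)) (d : ℕ) where
  len : ℕ
  b : ℕ → ℕ
  fin : ∀ i, len < i → b i = 0
  ε : (Fin (b 0) →₀ MvPolynomial (Fin n) K) →ₗ[MvPolynomial (Fin n) K]
      MvPolynomial (Fin n) K
  δ : ∀ i : ℕ, (Fin (b (i+1)) →₀ MvPolynomial (Fin n) K) →ₗ[MvPolynomial (Fin n) K]
      (Fin (b i) →₀ MvPolynomial (Fin n) K)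
  hε : ∀ j, MvPolynomial.IsHomogeneous (ε (Finsupp.single j 1)) d
  hδ : ∀ i j k, MvPolynomial.IsHomogeneous ((δ i (Finsupp.single j 1)) k) 1
  surj : LinearMap.range ε = (I : Submodule (MvPolynomial (Fin n) K) (MvPolynomial (Fin n) K))
  exact0 : LinearMap.ker ε = LinearMap.range (δ 0)
  exact : ∀ i, LinearMap.ker (δ i) = LinearMap.range (δ (i+1))

/-- The Castelnuovo–Mumford regularity of `I`, via the Eisenbud–Goto characterization
`reg(I) = min{d : I_{≥ d} has a d-linear resolution}`. -/
noncomputable def regEG {n : ℕ} (K : Type*) [Field K]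
    (I : Ideal (MvPolynomial (Fin n) K)) : ℕ :=
  sInf {d | Nonempty (LinearRes K (trunc K I d) d)}

/-! The monomials of `I` are those of `I_{≥ j}` together with the finitely many monomials `x^b`
of `I` of degree `< j`. Adding the singleton Stanley spaces `x^b K` to a Stanley decomposition
of `I_{≥ j}` gives one of `I` with the same bound `h`: if some such `x^b` exists and there is a
variable `x_k`, then `x^b x_k^j ∈ I_{≥ j}`, so the decomposition of `I_{≥ j}` has a space `x^c K[Z]`
with `j ≤ |c| ≤ h`. The infimum defining `hreg(I_{≥ j})` is attained because `I_{≥ j}` has some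
Stanley decomposition, obtained by cutting its exponent set off at a large box. -/

section

variable {n m : ℕ} {K : Type*} [Field K]

lemma monX_eq_monomial (b : Fin n → ℕ) :
    monX n K b = monomial (Finsupp.equivFunOnFinite.symm b) 1 := by
  rw [← prod_X_pow_eq_monomial, monX]
  refine (Finset.prod_subset (Finset.subset_univ _) fun k _ hk => ?_).symm
  have hbk : b k = 0 := Finsupp.notMem_support_iff.mp hk
  rw [hbk, pow_zero]

lemma monX_ne_zero (b : Fin n → ℕ) : monX n K b ≠ 0 := by
  rw [monX_eq_monomial]
  exact monomial_eq_zero.not.mpr one_ne_zero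

lemma monX_mem_of_le {I : Ideal (MvPolynomial (Fin n) K)} {c b : Fin n → ℕ}
    (hc : monX n K c ∈ I) (hcb : c ≤ b) : monX n K b ∈ I := by
  have hsplit : monX n K b = monX n K c * monX n K (b - c) := by
    simp only [monX, ← Finset.prod_mul_distrib, ← pow_add, Pi.sub_apply,
      Nat.add_sub_cancel' (hcb _)]
  rw [hsplit]
  exact I.mul_mem_right _ hc

lemma monX_mem_span_iff (a : Fin m → Fin n → ℕ) (b : Fin n → ℕ) :
    monX n K b ∈ Ideal.span (Set.range fun i => monX n K (a i)) ↔ ∃ i, a i ≤ b := by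
  classical
  have hrange : (Set.range fun i => monX n K (a i)) =
      (fun s => monomial s (1 : K)) '' Set.range (Finsupp.equivFunOnFinite.symm ∘ a) := by
    simp only [← Set.range_comp, Function.comp_def, monX_eq_monomial]
  rw [hrange, mem_ideal_span_monomial_image, monX_eq_monomial,
    support_monomial, if_neg one_ne_zero]
  simp [Finsupp.le_def, Pi.le_def]

lemma coeff_eq_zero_of_mem_trunc {I : Ideal (MvPolynomial (Fin n) K)} {j : ℕ}
    {f : MvPolynomial (Fin n) K} (hf : f ∈ trunc K I j) {d : Fin n →₀ ℕ} (hd : d.degree < j) :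
    coeff d f = 0 := by
  induction hf using Submodule.span_induction generalizing d with
  | mem g hg =>
    obtain ⟨-, e, hje, hg⟩ := hg
    exact hg.coeff_eq_zero (by omega)
  | zero => exact coeff_zero d
  | add x y _ _ hx hy => rw [coeff_add, hx hd, hy hd, add_zero]
  | smul r x _ hx =>
    rw [smul_eq_mul, coeff_mul]
    refine Finset.sum_eq_zero fun p hp => ?_
    have hle : p.2 ≤ d := by
      rw [← Finset.HasAntidiagonal.mem_antidiagonal.mp hp]
      exact le_add_self
    rw [hx ((Finsupp.degree_mono hle).trans_lt hd), mul_zero]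

lemma monX_mem_trunc_iff {I : Ideal (MvPolynomial (Fin n) K)} {j : ℕ} {b : Fin n → ℕ} :
    monX n K b ∈ trunc K I j ↔ monX n K b ∈ I ∧ j ≤ ∑ k, b k := by
  constructor
  · intro hb
    refine ⟨Ideal.span_le.mpr (fun f hf => hf.1) hb, ?_⟩
    by_contra! hlt
    have hcoeff := coeff_eq_zero_of_mem_trunc hb (d := Finsupp.equivFunOnFinite.symm b)
      (by rwa [Finsupp.degree_eq_sum])
    rw [monX_eq_monomial, coeff_monomial, if_pos rfl] at hcoeff
    exact one_ne_zero hcoeff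
  · rintro ⟨hbI, hjb⟩
    refine Ideal.subset_span ⟨hbI, _, hjb, ?_⟩
    rw [monX_eq_monomial]
    exact isHomogeneous_monomial _ (Finsupp.degree_eq_sum _)

lemma self_mem_orth (c : Fin n → ℕ) (Z : Finset (Fin n)) : c ∈ orth c Z :=
  ⟨le_rfl, fun _ _ => rfl⟩

lemma orth_empty (c : Fin n → ℕ) : orth c ∅ = {c} := by
  ext b
  refine ⟨fun hb => funext fun k => hb.2 k (Finset.notMem_empty k), fun hb => ?_⟩
  rw [Set.mem_singleton_iff.mp hb]
  exact self_mem_orth c ∅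

lemma mem_orth_iff_eq_inf {c g b : Fin n → ℕ} (hcg : c ≤ g) :
    b ∈ orth c (Finset.univ.filter fun k => c k = g k) ↔ c = b ⊓ g := by
  simp only [orth, Set.mem_ofPred_eq, Finset.mem_filter, Finset.mem_univ, true_and,
    funext_iff, Pi.inf_apply, Pi.le_def]
  constructor
  · rintro ⟨hcb, hZ⟩ k
    by_cases hk : c k = g k
    · rw [min_eq_right (hk ▸ hcb k), hk]
    · rw [hZ k hk, min_eq_left (hcg k)]
  · intro h
    refine ⟨fun k => (h k).trans_le (min_le_left _ _), fun k hk => ?_⟩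
    rcases min_choice (b k) (g k) with hm | hm
    · exact ((h k).trans hm).symm
    · exact absurd ((h k).trans hm) hk

structure IsStanleyPartition (U : Set (Fin n → ℕ))
    (C : Finset ((Fin n → ℕ) × Finset (Fin n))) : Prop where
  cover : U = ⋃ p ∈ C, orth p.1 p.2
  disj : (C : Set ((Fin n → ℕ) × Finset (Fin n))).PairwiseDisjoint fun p => orth p.1 p.2

namespace IsStanleyPartition

variable {U V : Set (Fin n → ℕ)} {C D : Finset ((Fin n → ℕ) × Finset (Fin n))}

lemma orth_subset (hC : IsStanleyPartition U C) {p : (Fin n → ℕ) × Finset (Fin n)}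
    (hp : p ∈ C) : orth p.1 p.2 ⊆ U :=
  hC.cover ▸ Set.subset_biUnion_of_mem (u := fun p => orth p.1 p.2) hp

lemma union (hC : IsStanleyPartition U C) (hD : IsStanleyPartition V D) (hUV : Disjoint U V) :
    IsStanleyPartition (U ∪ V) (C ∪ D) where
  cover := by rw [Finset.set_biUnion_union, ← hC.cover, ← hD.cover]
  disj := by
    rw [Finset.coe_union]
    exact hC.disj.union hD.disj fun p hp q hq _ =>
      hUV.mono (hC.orth_subset hp) (hD.orth_subset hq)

end IsStanleyPartition

lemma isStanleyPartition_singletons (F : Finset (Fin n → ℕ)) :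
    IsStanleyPartition (F : Set (Fin n → ℕ)) (F.image fun b => (b, ∅)) where
  cover := by
    rw [Finset.set_biUnion_finset_image, ← Finset.set_biUnion_coe]
    simp only [orth_empty, Set.biUnion_of_singleton]
  disj := by
    rw [Finset.coe_image]
    rintro _ ⟨b, -, rfl⟩ _ ⟨b', -, rfl⟩ hne
    simp only [Function.onFun, orth_empty, Set.disjoint_singleton]
    exact fun h => hne (h ▸ rfl)

open Classical in
/-- Cutting an upper set off at the box `[0, g]`: every exponent `b` lies in the Stanley space
of `b ⊓ g`, whose free variables are the coordinates where `b ⊓ g` reaches the wall of the box. -/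
lemma isStanleyPartition_inf {U : Set (Fin n → ℕ)} (hU : IsUpperSet U) (g : Fin n → ℕ)
    (hUg : ∀ b ∈ U, b ⊓ g ∈ U) :
    IsStanleyPartition U (((Finset.Iic g).filter (· ∈ U)).image
      fun c => (c, Finset.univ.filter fun k => c k = g k)) where
  cover := by
    ext b
    simp only [Finset.set_biUnion_finset_image, Set.mem_iUnion, Finset.mem_filter,
      Finset.mem_Iic, exists_prop]
    constructor
    · intro hb
      exact ⟨b ⊓ g, ⟨inf_le_right, hUg b hb⟩, (mem_orth_iff_eq_inf inf_le_right).mpr rfl⟩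
    · rintro ⟨c, ⟨-, hc⟩, hbc⟩
      exact hU hbc.1 hc
  disj := by
    rw [Finset.coe_image]
    rintro _ ⟨c, hc, rfl⟩ _ ⟨c', hc', rfl⟩ hne
    simp only [Finset.coe_filter, Finset.mem_Iic, Set.mem_ofPred_eq] at hc hc'
    refine Set.disjoint_left.mpr fun b hb hb' => hne ?_
    rw [(mem_orth_iff_eq_inf hc.1).mp hb, (mem_orth_iff_eq_inf hc'.1).mp hb']

lemma StanleyDec.isStanleyPartition {I J : Ideal (MvPolynomial (Fin n) K)}
    (D : StanleyDec K I J) :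
    IsStanleyPartition {b | monX n K b ∈ J ∧ monX n K b ∉ I}
      (Finset.univ.image fun i => (D.c i, D.Z i)) where
  cover := by
    rw [D.cover, Finset.set_biUnion_finset_image]
    simp
  disj := by
    rw [Finset.coe_image]
    rintro _ ⟨i, -, rfl⟩ _ ⟨i', -, rfl⟩ hne
    exact D.disj fun h => hne (h ▸ rfl)

lemma IsStanleyPartition.exists_stanleyDec {I J : Ideal (MvPolynomial (Fin n) K)}
    {C : Finset ((Fin n → ℕ) × Finset (Fin n))}
    (hC : IsStanleyPartition {b | monX n K b ∈ J ∧ monX n K b ∉ I} C) :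
    ∃ D : StanleyDec K I J, ∀ i, (D.c i, D.Z i) ∈ C := by
  let p : Fin C.card → (Fin n → ℕ) × Finset (Fin n) := fun i => C.equivFin.symm i
  refine ⟨⟨C.card, fun i => (p i).1, fun i => (p i).2, ?_, ?_⟩, fun i => (C.equivFin.symm i).2⟩
  · rw [hC.cover, ← Finset.set_biUnion_coe, Set.biUnion_eq_iUnion]
    exact (C.equivFin.symm.surjective.iUnion_comp fun q => orth q.1.1 q.1.2).symm
  · intro i i' hne
    exact hC.disj (C.equivFin.symm i).2 (C.equivFin.symm i').2
      (Subtype.val_injective.ne (C.equivFin.symm.injective.ne hne))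

lemma StanleyDec.exists_bound {I J : Ideal (MvPolynomial (Fin n) K)} (D : StanleyDec K I J) :
    ∃ h, ∀ i, ∑ k, D.c i k ≤ h :=
  Finite.exists_le _

lemma setOf_monX_mem_and_notMem_bot (J : Ideal (MvPolynomial (Fin n) K)) :
    {b | monX n K b ∈ J ∧ monX n K b ∉ (⊥ : Ideal (MvPolynomial (Fin n) K))} =
      {b | monX n K b ∈ J} := by
  simp only [Ideal.mem_bot, monX_ne_zero, not_false_eq_true, and_true]

lemma StanleyDec.monX_mem_iff {J : Ideal (MvPolynomial (Fin n) K)} (D : StanleyDec K ⊥ J)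
    {b : Fin n → ℕ} : monX n K b ∈ J ↔ ∃ i, b ∈ orth (D.c i) (D.Z i) := by
  simpa [Ideal.mem_bot, monX_ne_zero] using Set.ext_iff.mp D.cover b

lemma isUpperSet_setOf_monX_mem (J : Ideal (MvPolynomial (Fin n) K)) :
    IsUpperSet {b | monX n K b ∈ J} :=
  fun _ _ hcb hc => monX_mem_of_le hc hcb

lemma nonempty_stanleyDec_trunc_span (a : Fin m → Fin n → ℕ) (j : ℕ) :
    Nonempty (StanleyDec K ⊥ (trunc K (Ideal.span (Set.range fun i => monX n K (a i))) j)) := by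
  obtain ⟨N, hN⟩ := Finite.exists_le fun p : Fin m × Fin n => a p.1 p.2
  let g : Fin n → ℕ := fun _ => max N j
  have hinf : ∀ b, (∃ i, a i ≤ b) ∧ j ≤ ∑ k, b k → (∃ i, a i ≤ b ⊓ g) ∧ j ≤ ∑ k, (b ⊓ g) k := by
    rintro b ⟨⟨i, hi⟩, hjb⟩
    refine ⟨⟨i, le_inf hi fun k => (hN (i, k)).trans (le_max_left N j)⟩, ?_⟩
    by_cases hbg : b ≤ g
    · rwa [inf_eq_left.mpr hbg]
    · obtain ⟨k, hk⟩ : ∃ k, g k < b k := by simpa [Pi.le_def] using hbg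
      calc j ≤ (b ⊓ g) k := by simp [g, min_eq_right hk.le]
        _ ≤ ∑ k, (b ⊓ g) k := Finset.single_le_sum (fun _ _ => Nat.zero_le _) (Finset.mem_univ k)
  have hC := isStanleyPartition_inf
    (isUpperSet_setOf_monX_mem (trunc K (Ideal.span (Set.range fun i => monX n K (a i))) j)) g
    fun b hb => by
      simp only [Set.mem_ofPred_eq, monX_mem_trunc_iff, monX_mem_span_iff] at hb ⊢
      exact hinf b hb
  rw [← setOf_monX_mem_and_notMem_bot] at hC
  exact ⟨hC.exists_stanleyDec.choose⟩

section trunc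

variable {I : Ideal (MvPolynomial (Fin n) K)} {j h : ℕ} (D : StanleyDec K ⊥ (trunc K I j))

lemma le_of_monX_mem_trunc (hD : ∀ i, ∑ k, D.c i k ≤ h) {b : Fin n → ℕ}
    (hb : monX n K b ∈ trunc K I j) : j ≤ h := by
  obtain ⟨i, -⟩ := D.monX_mem_iff.mp hb
  have hci := D.monX_mem_iff.mpr ⟨i, self_mem_orth (D.c i) (D.Z i)⟩
  exact (monX_mem_trunc_iff.mp hci).2.trans (hD i)

lemma sum_le_of_monX_mem (hD : ∀ i, ∑ k, D.c i k ≤ h) {b : Fin n → ℕ}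
    (hb : monX n K b ∈ I) (hbj : ∑ k, b k < j) : ∑ k, b k ≤ h := by
  rcases isEmpty_or_nonempty (Fin n) with _ | ⟨⟨k₀⟩⟩
  · simp
  · have hshift : monX n K (b + Pi.single k₀ j) ∈ trunc K I j := by
      refine monX_mem_trunc_iff.mpr ⟨monX_mem_of_le hb le_self_add, ?_⟩
      simp [Finset.sum_add_distrib]
    exact hbj.le.trans (le_of_monX_mem_trunc D hD hshift)

lemma exists_stanleyDec_of_trunc (hD : ∀ i, ∑ k, D.c i k ≤ h) :
    ∃ D' : StanleyDec K ⊥ I, ∀ i, ∑ k, D'.c i k ≤ h := by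
  classical
  let F := (Finset.Iic fun _ => j).filter fun b : Fin n → ℕ => monX n K b ∈ I ∧ ∑ k, b k < j
  have hF : ∀ b, b ∈ F ↔ monX n K b ∈ I ∧ ∑ k, b k < j := fun b => by
    refine ⟨fun hb => (Finset.mem_filter.mp hb).2, fun hb => Finset.mem_filter.mpr ⟨?_, hb⟩⟩
    exact Finset.mem_Iic.mpr fun k =>
      (Finset.single_le_sum (fun _ _ => Nat.zero_le _) (Finset.mem_univ k)).trans hb.2.le
  have hsplit : {b | monX n K b ∈ I} = {b | monX n K b ∈ trunc K I j} ∪ F := by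
    ext b
    simp only [Set.mem_union, Set.mem_ofPred_eq, Finset.mem_coe, hF, monX_mem_trunc_iff,
      ← and_or_left, le_or_gt, and_true]
  have hdisj : Disjoint {b | monX n K b ∈ trunc K I j} ↑F :=
    Set.disjoint_left.mpr fun b hb hbF => (monX_mem_trunc_iff.mp hb).2.not_gt ((hF b).mp hbF).2
  have hC := D.isStanleyPartition
  rw [setOf_monX_mem_and_notMem_bot] at hC
  have hC' := hC.union (isStanleyPartition_singletons F) hdisj
  rw [← hsplit, ← setOf_monX_mem_and_notMem_bot] at hC'
  obtain ⟨D', hD'⟩ := hC'.exists_stanleyDec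
  refine ⟨D', fun i => ?_⟩
  rcases Finset.mem_union.mp (hD' i) with hi | hi
  · obtain ⟨i', -, hi'⟩ := Finset.mem_image.mp hi
    rw [← (Prod.mk.inj hi').1]
    exact hD i'
  · obtain ⟨b, hb, hbi⟩ := Finset.mem_image.mp hi
    rw [← (Prod.mk.inj hbi).1]
    exact sum_le_of_monX_mem D hD ((hF b).mp hb).1 ((hF b).mp hb).2

end trunc

end

theorem hreg_le_hreg_trunc_general (n m : ℕ) (K : Type*) [Field K]
    (a : Fin m → (Fin n → ℕ)) (I : Ideal (MvPolynomial (Fin n) K))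
    (hI : I = Ideal.span (Set.range fun i => monX n K (a i)))
    (j : ℕ) :
    hregQ K ⊥ I ≤ hregQ K ⊥ (trunc K I j) := by
  subst hI
  obtain ⟨D⟩ := nonempty_stanleyDec_trunc_span (K := K) a j
  obtain ⟨h, hD⟩ := D.exists_bound
  refine csInf_le_csInf' ⟨h, D, hD⟩ ?_
  rintro h ⟨D', hD'⟩
  exact exists_stanleyDec_of_trunc D' hD'

/-- `hreg(I) ≤ hreg(I_{≥ j})` for every monomial ideal `I` and `j ≥ 0`,
where `I_{≥ j}` is generated by the homogeneous elements of `I` of degree `≥ j`. -/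
theorem hreg_le_hreg_trunc (n m : ℕ) (K : Type*) [Field K]
    (a : Fin m → (Fin n → ℕ)) (I : Ideal (MvPolynomial (Fin n) K))
    (hI : I = Ideal.span (Set.range fun i => monX n K (a i)))
    (hmin : ∀ i j, i ≠ j → ¬ a i ≤ a j) (j : ℕ) :
    hregQ K ⊥ I ≤ hregQ K ⊥ (trunc K I j) :=
  hreg_le_hreg_trunc_general n m K a I hI j
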